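/- The minimum eigenvalue of Σ(d) is at most min_i (1 - |2d_i - 1|). -/

import Mathlib

open Matrix

lemma rayleigh_aux {n : Type*} [Fintype n] [DecidableEq n] [Nonempty n]
    {A : Matrix n n ℝ} (hA : A.IsHermitian) (v : n → ℝ) :
    (⨅ i, hA.eigenvalues i) * (v ⬝ᵥ v) ≤ v ⬝ᵥ (A *ᵥ v) := by
  set c := ⨅ i, hA.eigenvalues i with hc
  have hcle : ∀ j, c ≤ hA.eigenvalues j := fun j =>
    ciInf_le (Set.Finite.bddBelow (Set.finite_range _)) j
  set U : Matrix n n ℝ := (hA.eigenvectorUnitary : Matrix n n ℝ) with hU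
  have hUu2 : U * star U = 1 := hA.eigenvectorUnitary.2.2
  set w : n → ℝ := star U *ᵥ v with hw
  have hAspec : A = U * Matrix.diagonal hA.eigenvalues * star U := by
    have := hA.spectral_theorem
    simpa using this
  have hvU : v ᵥ* U = w := by
    ext j
    simp [hw, vecMul, mulVec, dotProduct, conjTranspose_apply, mul_comm]
  have key : v ⬝ᵥ (A *ᵥ v) = ∑ j, hA.eigenvalues j * (w j)^2 := by
    conv_lhs => rw [hAspec]
    rw [← mulVec_mulVec, ← mulVec_mulVec, dotProduct_mulVec, hvU, dotProduct]
    congr 1; ext j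
    rw [mulVec_diagonal]; ring
  have key2 : w ⬝ᵥ w = v ⬝ᵥ v := by
    have hUw : U *ᵥ w = v := by rw [hw, mulVec_mulVec, hUu2, one_mulVec]
    calc w ⬝ᵥ w = (v ᵥ* U) ⬝ᵥ w := by rw [hvU]
      _ = v ⬝ᵥ (U *ᵥ w) := by rw [← dotProduct_mulVec]
      _ = v ⬝ᵥ v := by rw [hUw]
  rw [key]
  calc c * (v ⬝ᵥ v) = ∑ j, c * (w j)^2 := by
        rw [← key2, dotProduct, Finset.mul_sum]; congr 1; ext j; ring
    _ ≤ ∑ j, hA.eigenvalues j * (w j)^2 :=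
        Finset.sum_le_sum fun j _ => mul_le_mul_of_nonneg_right (hcle j) (sq_nonneg _)

/-- The minimum eigenvalue of `Σ(d)` is at most `min_i (1 - |2 d_i - 1|)`. -/
theorem stmt_7 (p k : ℕ) (hp : 1 ≤ p) (hk1 : 1 ≤ k) (hk : k ≤ p) (d : Fin p → ℝ)
    (hd : ∀ i, d i ∈ Set.Icc (0 : ℝ) 1)
    (Sig : Matrix {S : Finset (Fin p) // S.card ≤ k}
                  {S : Finset (Fin p) // S.card ≤ k} ℝ)
    (hSig : ∀ S S', Sig S S' = ∏ i ∈ symmDiff S.1 S'.1, (2 * d i - 1))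
    (hHerm : Sig.IsHermitian) :
    (⨅ i, hHerm.eigenvalues i) ≤ ⨅ i : Fin p, (1 - |2 * d i - 1|) := by
  let e0 : {S : Finset (Fin p) // S.card ≤ k} := ⟨∅, by simp⟩
  haveI : Nonempty {S : Finset (Fin p) // S.card ≤ k} := ⟨e0⟩
  haveI : Nonempty (Fin p) := ⟨⟨0, hp⟩⟩
  apply le_ciInf
  intro i
  set ε := 2 * d i - 1 with hε
  let e1 : {S : Finset (Fin p) // S.card ≤ k} := ⟨{i}, by simpa using hk1⟩
  have he0 : (e0 : Finset (Fin p)) = ∅ := rfl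
  have he1 : (e1 : Finset (Fin p)) = {i} := rfl
  have hne : e0 ≠ e1 := by
    intro h
    have : (e0 : Finset (Fin p)) = (e1 : Finset (Fin p)) := congrArg Subtype.val h
    rw [he0, he1] at this
    exact (Finset.singleton_ne_empty i) this.symm
  set s : ℝ := if 0 ≤ ε then (-1 : ℝ) else 1 with hs
  have hsε : s * ε = -|ε| := by
    rcases le_or_gt 0 ε with h | h
    · rw [hs, if_pos h, abs_of_nonneg h]; ring
    · rw [hs, if_neg (not_le.mpr h), abs_of_neg h]; ring
  have hs2 : s * s = 1 := by rw [hs]; split_ifs <;> norm_num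
  set v : {S : Finset (Fin p) // S.card ≤ k} → ℝ :=
    Pi.single e0 1 + Pi.single e1 s with hv
  have hv00 : Sig e0 e0 = 1 := by
    rw [hSig, he0]; simp
  have hv11 : Sig e1 e1 = 1 := by
    rw [hSig, he1]; simp
  have hv01 : Sig e0 e1 = ε := by
    rw [hSig, he0, he1, symmDiff_def]; simp [hε]
  have hv10 : Sig e1 e0 = ε := by
    rw [hSig, he0, he1, symmDiff_def]; simp [hε]
  have hdot : v ⬝ᵥ v = 2 := by
    simp [hv, dotProduct_add, add_dotProduct,
      single_dotProduct, Pi.single_apply, hne, hne.symm, hs2]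
    norm_num
  have hquad : v ⬝ᵥ (Sig *ᵥ v) = 2 - 2 * |ε| := by
    rw [hv, Matrix.mulVec_add, Matrix.mulVec_single, Matrix.mulVec_single]
    simp only [dotProduct_add, add_dotProduct, single_dotProduct,
      Pi.add_apply, Pi.smul_apply, MulOpposite.smul_eq_mul_unop, MulOpposite.unop_op,
      Matrix.col_apply]
    rw [hv00, hv11, hv01, hv10]
    nlinarith [hsε, hs2]
  have := rayleigh_aux hHerm v
  rw [hdot, hquad] at this
  linarith
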